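/- Let X be a proper geodesic metric space, e ∈ X, and N a Morse gauge. There exists a constant δ_N depending only on N such that: if α and β are N-Morse geodesic rays with α(0) = β(0) = e that are asymptotic (i.e., have bounded Hausdorff distance), then d(α(t), β(t)) ≤ δ_N for all t ≥ 0. -/

import Mathlib

open Metric Set

/-- A `(λ, ε)`-quasi-geodesic defined on the interval `[a,b]`. -/
def IsQuasiGeodesicOn {X : Type*} [MetricSpace X] (lam eps a b : ℝ) (σ : ℝ → X) : Prop :=
  ∀ s ∈ Set.Icc a b, ∀ t ∈ Set.Icc a b,
    (1 / lam) * |s - t| - eps ≤ dist (σ s) (σ t) ∧ dist (σ s) (σ t) ≤ lam * |s - t| + eps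

/-- A geodesic segment from `x` to `y`, parametrized by arclength on `[0, dist x y]`. -/
def IsGeodesicSegment {X : Type*} [MetricSpace X] (γ : ℝ → X) (x y : X) : Prop :=
  γ 0 = x ∧ γ (dist x y) = y ∧
    ∀ s ∈ Set.Icc (0:ℝ) (dist x y), ∀ t ∈ Set.Icc (0:ℝ) (dist x y),
      dist (γ s) (γ t) = |s - t|

/-- A geodesic metric space: any two points are joined by a geodesic segment. -/
def GeodesicSpace (X : Type*) [MetricSpace X] : Prop :=
  ∀ x y : X, ∃ γ : ℝ → X, IsGeodesicSegment γ x y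

/-- A geodesic ray, parametrized by arclength on `[0, ∞)`. -/
def IsGeodesicRay {X : Type*} [MetricSpace X] (γ : ℝ → X) : Prop :=
  ∀ s ∈ Set.Ici (0:ℝ), ∀ t ∈ Set.Ici (0:ℝ), dist (γ s) (γ t) = |s - t|

/-- A set `im` (the image of a geodesic) is `N`-Morse for a Morse gauge `N : ℝ → ℝ → ℝ` if
every `(λ,ε)`-quasi-geodesic (`λ ≥ 1`, `ε ≥ 0`) with endpoints on `im` stays in the
`N λ ε`-neighborhood of `im`. -/
def IsMorseWith {X : Type*} [MetricSpace X] (N : ℝ → ℝ → ℝ) (im : Set X) : Prop :=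
  ∀ lam eps : ℝ, 1 ≤ lam → 0 ≤ eps → ∀ a b : ℝ, a ≤ b → ∀ σ : ℝ → X,
    IsQuasiGeodesicOn lam eps a b σ → σ a ∈ im → σ b ∈ im →
    ∀ t ∈ Set.Icc a b, Metric.infDist (σ t) im ≤ N lam eps

/-- An `N`-Morse geodesic ray. -/
def IsMorseRay {X : Type*} [MetricSpace X] (N : ℝ → ℝ → ℝ) (γ : ℝ → X) : Prop :=
  IsGeodesicRay γ ∧ IsMorseWith N (γ '' Set.Ici 0)

/-- An `N`-Morse geodesic segment from `x` to `y`. -/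
def IsMorseSegment {X : Type*} [MetricSpace X] (N : ℝ → ℝ → ℝ) (γ : ℝ → X) (x y : X) : Prop :=
  IsGeodesicSegment γ x y ∧ IsMorseWith N (γ '' Set.Icc 0 (dist x y))

/-!
Let `e = α 0 = β 0`. Given `t`, go far out along `β` to `β S` and let `α s` be a point of `α`
within `1` of the closest approach of `α` to `β S`; since the rays are asymptotic, `s ≥ t` once
`S` is large. Following `α` from `e` to `α s` and then a geodesic to `β S` is a
`(3, 1)`-quasi-geodesic with both endpoints on `β`, so the Morse property of `β` puts `α t`
within `N 3 1` of some `β s'`. Distances to `e` force `|s' - t| ≤ dist (α t) (β s')`, whence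
`dist (α t) (β t) ≤ 2 * N 3 1`.
-/

variable {X : Type*}

noncomputable def concatPath (α : ℝ → X) (s : ℝ) (g : ℝ → X) : ℝ → X :=
  fun x => if x ≤ s then α x else g (x - s)

section

variable {α g : ℝ → X} {s x : ℝ}

theorem concatPath_of_le (hx : x ≤ s) : concatPath α s g x = α x := if_pos hx

theorem concatPath_of_ge (hg : g 0 = α s) (hx : s ≤ x) : concatPath α s g x = g (x - s) := by
  rcases hx.eq_or_lt with heq | hlt
  · simp [concatPath, ← heq, hg]
  · exact if_neg (not_le.2 hlt)

end

variable [MetricSpace X]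

theorem isQuasiGeodesicOn_of_le {lam eps a b : ℝ} {σ : ℝ → X}
    (h : ∀ x ∈ Icc a b, ∀ y ∈ Icc a b, x ≤ y →
      (1 / lam) * (y - x) - eps ≤ dist (σ x) (σ y) ∧ dist (σ x) (σ y) ≤ lam * (y - x) + eps) :
    IsQuasiGeodesicOn lam eps a b σ := by
  intro x hx y hy
  rcases le_total x y with hxy | hyx
  · rw [abs_of_nonpos (sub_nonpos.2 hxy), neg_sub]
    exact h x hx y hy hxy
  · rw [abs_of_nonneg (sub_nonneg.2 hyx), dist_comm]
    exact h y hy x hx hyx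

namespace IsGeodesicSegment

variable {g : ℝ → X} {x y : X} {u : ℝ}

theorem dist_left (hg : IsGeodesicSegment g x y) (hu : u ∈ Icc 0 (dist x y)) :
    dist x (g u) = u := by
  rw [← hg.1, hg.2.2 0 ⟨le_rfl, dist_nonneg⟩ u hu, zero_sub, abs_neg, abs_of_nonneg hu.1]

theorem dist_right (hg : IsGeodesicSegment g x y) (hu : u ∈ Icc 0 (dist x y)) :
    dist (g u) y = dist x y - u := by
  conv_lhs => rw [← hg.2.1]
  rw [hg.2.2 u hu _ ⟨dist_nonneg, le_rfl⟩, abs_of_nonpos (sub_nonpos.2 hu.2), neg_sub]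

end IsGeodesicSegment

namespace IsGeodesicRay

variable {α β : ℝ → X} {s t : ℝ}

theorem dist_eq_sub (hα : IsGeodesicRay α) (hs : 0 ≤ s) (hst : s ≤ t) :
    dist (α s) (α t) = t - s := by
  rw [hα s hs t (hs.trans hst), abs_of_nonpos (sub_nonpos.2 hst), neg_sub]

theorem dist_zero_left (hα : IsGeodesicRay α) (ht : 0 ≤ t) : dist (α 0) (α t) = t := by
  simpa using hα.dist_eq_sub le_rfl ht

theorem dist_le_two_mul_dist (hα : IsGeodesicRay α) (hβ : IsGeodesicRay β) (h0 : α 0 = β 0)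
    (hs : 0 ≤ s) (ht : 0 ≤ t) : dist (α t) (β t) ≤ 2 * dist (α t) (β s) := by
  have hst : |s - t| ≤ dist (α t) (β s) := by
    have := abs_dist_sub_le (β s) (α t) (α 0)
    rwa [dist_comm (β s), h0, hβ.dist_zero_left hs, ← h0, dist_comm (α t),
      hα.dist_zero_left ht, dist_comm] at this
  calc dist (α t) (β t) ≤ dist (α t) (β s) + dist (β s) (β t) := dist_triangle _ _ _
    _ = dist (α t) (β s) + |s - t| := by rw [hβ s hs t ht]
    _ ≤ 2 * dist (α t) (β s) := by linarith

theorem dist_le_two_mul_infDist (hα : IsGeodesicRay α) (hβ : IsGeodesicRay β) (h0 : α 0 = β 0)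
    (ht : 0 ≤ t) : dist (α t) (β t) ≤ 2 * infDist (α t) (β '' Ici 0) := by
  rw [← div_le_iff₀' two_pos, le_infDist ⟨β 0, mem_image_of_mem β self_mem_Ici⟩]
  rintro _ ⟨s, hs, rfl⟩
  rw [div_le_iff₀' two_pos]
  exact hα.dist_le_two_mul_dist hβ h0 hs ht

end IsGeodesicRay

section concatPath

variable {α g : ℝ → X} {s x : ℝ} {p : X} {ε : ℝ}

/-- The triangle inequality through `p` gives the lower bound `u - ε`, and through `α s` the
lower bound `(s - x) - u`; one of the two is at least a third of `(s - x) + u`. -/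
theorem dist_ray_segment_near_projection (hα : IsGeodesicRay α) (hg : IsGeodesicSegment g (α s) p)
    (hproj : ∀ x ∈ Icc 0 s, dist (α s) p ≤ dist (α x) p + ε)
    (hx : x ∈ Icc 0 s) {u : ℝ} (hu : u ∈ Icc 0 (dist (α s) p)) :
    (1 / 3) * ((s - x) + u) - ε ≤ dist (α x) (g u) ∧ dist (α x) (g u) ≤ (s - x) + u := by
  have hε : 0 ≤ ε := by simpa using hproj s ⟨hx.1.trans hx.2, le_rfl⟩
  have hαx : dist (α x) (α s) = s - x := hα.dist_eq_sub hx.1 hx.2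
  have hgu : dist (α s) (g u) = u := hg.dist_left hu
  have hpu : dist (g u) p = dist (α s) p - u := hg.dist_right hu
  have via_p : u - ε ≤ dist (α x) (g u) := by
    linarith [hproj x hx, dist_triangle (α x) (g u) p]
  have via_αs : (s - x) - u ≤ dist (α x) (g u) := by
    linarith [dist_triangle (α x) (g u) (α s), dist_comm (g u) (α s)]
  refine ⟨?_, by linarith [dist_triangle (α x) (α s) (g u)]⟩
  rcases le_total (s - x) (2 * u) with h | h <;> linarith

theorem isQuasiGeodesicOn_concatPath (hα : IsGeodesicRay α) (hs : 0 ≤ s)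
    (hg : IsGeodesicSegment g (α s) p)
    (hproj : ∀ x ∈ Icc 0 s, dist (α s) p ≤ dist (α x) p + ε) :
    IsQuasiGeodesicOn 3 ε 0 (s + dist (α s) p) (concatPath α s g) := by
  have hε : 0 ≤ ε := by simpa using hproj s ⟨hs, le_rfl⟩
  refine isQuasiGeodesicOn_of_le fun x hx y hy hxy => ?_
  rcases le_total y s with hys | hsy
  · rw [concatPath_of_le (hxy.trans hys), concatPath_of_le hys, hα.dist_eq_sub hx.1 hxy]
    constructor <;> linarith
  have hy' : y - s ∈ Icc 0 (dist (α s) p) := ⟨by linarith, by linarith [hy.2]⟩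
  rw [concatPath_of_ge hg.1 hsy]
  rcases le_total x s with hxs | hsx
  · rw [concatPath_of_le hxs]
    have h := dist_ray_segment_near_projection hα hg hproj ⟨hx.1, hxs⟩ hy'
    rw [show s - x + (y - s) = y - x by ring] at h
    constructor <;> linarith
  · have hx' : x - s ∈ Icc 0 (dist (α s) p) := ⟨by linarith, by linarith [hx.2]⟩
    rw [concatPath_of_ge hg.1 hsx, hg.2.2 _ hx' _ hy', abs_of_nonpos (by linarith)]
    constructor <;> linarith

end concatPath

theorem IsGeodesicRay.infDist_le_of_isMorseWith {N : ℝ → ℝ → ℝ} {α β : ℝ → X}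
    (hX : GeodesicSpace X) (hα : IsGeodesicRay α) (hβ : IsGeodesicRay β)
    (hβM : IsMorseWith N (β '' Ici 0)) (h0 : α 0 = β 0)
    (hfin : hausdorffEDist (α '' Ici 0) (β '' Ici 0) ≠ ⊤) {t : ℝ} (ht : 0 ≤ t) :
    infDist (α t) (β '' Ici 0) ≤ N 3 1 := by
  set S := t + hausdorffDist (β '' Ici 0) (α '' Ici 0) + 2
  have hS : 0 ≤ S := by linarith [hausdorffDist_nonneg (s := β '' Ici 0) (t := α '' Ici 0)]
  obtain ⟨_, ⟨s, hs, rfl⟩, hnear⟩ := (infDist_lt_iff ⟨α 0, mem_image_of_mem α self_mem_Ici⟩).1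
    (lt_add_one (infDist (β S) (α '' Ici 0)))
  have hproj : ∀ x ∈ Icc 0 s, dist (α s) (β S) ≤ dist (α x) (β S) + 1 := fun x hx => by
    have hfar : infDist (β S) (α '' Ici 0) ≤ dist (β S) (α x) :=
      infDist_le_dist_of_mem (mem_image_of_mem α hx.1)
    rw [dist_comm (α s), dist_comm (α x)]
    linarith
  have hts : t ≤ s := by
    have hH := infDist_le_hausdorffDist_of_mem (mem_image_of_mem β (mem_Ici.2 hS))
      (by rwa [hausdorffEDist_comm])
    have hS_le := dist_triangle (β 0) (α s) (β S)
    rw [hβ.dist_zero_left hS, ← h0, hα.dist_zero_left hs, dist_comm] at hS_le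
    linarith
  obtain ⟨g, hg⟩ := hX (α s) (β S)
  have hb : 0 ≤ s + dist (α s) (β S) := add_nonneg hs dist_nonneg
  have hmorse := hβM 3 1 (by norm_num) zero_le_one 0 _ hb _
    (isQuasiGeodesicOn_concatPath hα hs hg hproj)
    (by rw [concatPath_of_le hs, h0]; exact mem_image_of_mem β self_mem_Ici)
    (by rw [concatPath_of_ge hg.1 (le_add_of_nonneg_right dist_nonneg), add_sub_cancel_left,
        hg.2.1]; exact mem_image_of_mem β (mem_Ici.2 hS))
    t ⟨ht, hts.trans (le_add_of_nonneg_right dist_nonneg)⟩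
  rwa [concatPath_of_le hts] at hmorse

/-- For each Morse gauge `N` there is a constant `δ_N` such that in any proper geodesic
space, two asymptotic `N`-Morse geodesic rays with the same basepoint stay within
distance `δ_N` of each other. -/
theorem asymptotic_morse_rays_uniformly_close (N : ℝ → ℝ → ℝ) :
    ∃ δ : ℝ, ∀ (X : Type) [MetricSpace X] [ProperSpace X],
      GeodesicSpace X →
      ∀ (e : X) (α β : ℝ → X),
        IsMorseRay N α → IsMorseRay N β → α 0 = e → β 0 = e →
        EMetric.hausdorffEdist (α '' Set.Ici 0) (β '' Set.Ici 0) ≠ ⊤ →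
        ∀ t : ℝ, 0 ≤ t → dist (α t) (β t) ≤ δ := by
  refine ⟨2 * N 3 1, fun X _ _ hX _ α β hα hβ hα0 hβ0 hfin t ht => ?_⟩
  have h0 : α 0 = β 0 := hα0.trans hβ0.symm
  calc dist (α t) (β t) ≤ 2 * infDist (α t) (β '' Ici 0) :=
        hα.1.dist_le_two_mul_infDist hβ.1 h0 ht
    _ ≤ 2 * N 3 1 := by
        gcongr
        exact hα.1.infDist_le_of_isMorseWith hX hβ.1 hβ.2 h0 hfin ht
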